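/- If G is a connected graph with at least one edge, then γ(G) = 1/β(Ĝ), where γ(G) is the largest real zero of the adjoint polynomial h(G,x) and β(Ĝ) is the smallest zero in (0,1] of the independence polynomial of the associated graph Ĝ. -/

import Mathlib

open Polynomial

/-- A clique cover of `G`: a partition of the vertex set into parts each inducing a clique. -/
def SimpleGraph.IsCliqueCover {V : Type*} [Fintype V] [DecidableEq V] (G : SimpleGraph V)
    (P : Finpartition (Finset.univ : Finset V)) : Prop :=
  ∀ p ∈ P.parts, G.IsClique (p : Set V)

/-- `a_k(G)`: the number of clique covers of `G` with exactly `k` parts. -/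
noncomputable def numCliqueCovers {V : Type*} [Fintype V] [DecidableEq V] (G : SimpleGraph V)
    (k : ℕ) : ℕ :=
  {P : Finpartition (Finset.univ : Finset V) | G.IsCliqueCover P ∧ P.parts.card = k}.ncard

/-- A finset of vertices is independent: pairwise non-adjacent. -/
def SimpleGraph.IsIndepFinset {W : Type*} (H : SimpleGraph W) (s : Finset W) : Prop :=
  ∀ v ∈ s, ∀ w ∈ s, ¬ H.Adj v w

/-- `i_k(H)`: the number of independent sets of size `k` in `H`. -/
noncomputable def numIndepSets {W : Type*} (H : SimpleGraph W) (k : ℕ) : ℕ :=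
  {s : Finset W | H.IsIndepFinset s ∧ s.card = k}.ncard

/-- The auxiliary one-sided relation in the construction of `Ĝ`:
for edges `e = (u_i,u_j)`, `f = (u_k,u_l)` with `j ≤ l`, they are related iff
`i = k`, or `j = k`, or (`j = l` and `u_i, u_k` non-adjacent). -/
def hatRel {n : ℕ} (G : SimpleGraph (Fin n)) (e f : Fin n × Fin n) : Prop :=
  e.2 ≤ f.2 ∧ (e.1 = f.1 ∨ e.2 = f.1 ∨ (e.2 = f.2 ∧ ¬ G.Adj e.1 f.1))

/-- The graph `Ĝ` associated to `G` with its vertex ordering: vertices are the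
edges `(u_i,u_j)` with `i < j`. -/
def hatGraph {n : ℕ} (G : SimpleGraph (Fin n)) :
    SimpleGraph {p : Fin n × Fin n // p.1 < p.2 ∧ G.Adj p.1 p.2} where
  Adj e f := e ≠ f ∧ (hatRel G e.1 f.1 ∨ hatRel G f.1 e.1)
  symm := ⟨fun e f h => ⟨h.1.symm, h.2.symm⟩⟩
  loopless := ⟨fun e h => h.1 rfl⟩

/-- The independence polynomial `I(H,x) = Σ_k (-1)^k i_k(H) x^k` (over `ℝ`). -/
noncomputable def indepPoly {W : Type*} [Fintype W] (H : SimpleGraph W) : Polynomial ℝ :=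
  ∑ k ∈ Finset.range (Fintype.card W + 1), C ((-1 : ℝ) ^ k * (numIndepSets H k : ℝ)) * X ^ k

/-- The adjoint polynomial `h(G,x) = Σ_k (-1)^{n-k} a_k(G) x^k` (over `ℝ`). -/
noncomputable def adjPoly {V : Type*} [Fintype V] [DecidableEq V] (G : SimpleGraph V) :
    Polynomial ℝ :=
  ∑ k ∈ Finset.range (Fintype.card V + 1),
    C ((-1 : ℝ) ^ (Fintype.card V - k) * (numCliqueCovers G k : ℝ)) * X ^ k

/-- `h*(G,x) = x^n h(G,1/x) = Σ_k (-1)^k a_{n-k}(G) x^k` (over `ℝ`). -/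
noncomputable def hStarPoly {V : Type*} [Fintype V] [DecidableEq V] (G : SimpleGraph V) :
    Polynomial ℝ :=
  ∑ k ∈ Finset.range (Fintype.card V + 1),
    C ((-1 : ℝ) ^ k * (numCliqueCovers G (Fintype.card V - k) : ℝ)) * X ^ k

/-- Integer version of the independence polynomial. -/
noncomputable def indepPolyZ {W : Type*} [Fintype W] (H : SimpleGraph W) : Polynomial ℤ :=
  ∑ k ∈ Finset.range (Fintype.card W + 1), C ((-1 : ℤ) ^ k * (numIndepSets H k : ℤ)) * X ^ k

/-- Integer version of `h*`. -/
noncomputable def hStarPolyZ {V : Type*} [Fintype V] [DecidableEq V] (G : SimpleGraph V) :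
    Polynomial ℤ :=
  ∑ k ∈ Finset.range (Fintype.card V + 1),
    C ((-1 : ℤ) ^ k * (numCliqueCovers G (Fintype.card V - k) : ℤ)) * X ^ k

/-- A finset of edges forming a matching in `G`. -/
def SimpleGraph.IsMatchingFinset {V : Type*} (G : SimpleGraph V) (s : Finset (Sym2 V)) : Prop :=
  (↑s : Set (Sym2 V)) ⊆ G.edgeSet ∧
    ∀ e ∈ s, ∀ f ∈ s, e ≠ f → ∀ v, ¬(v ∈ e ∧ v ∈ f)

/-- `m_k(G)`: number of matchings of size `k`. -/
noncomputable def numMatchings {V : Type*} (G : SimpleGraph V) (k : ℕ) : ℕ :=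
  {s : Finset (Sym2 V) | G.IsMatchingFinset s ∧ s.card = k}.ncard

/-- The matching polynomial `M(G,x) = Σ_k (-1)^k m_k(G) x^{n-k}` (over `ℝ`). -/
noncomputable def matchPoly {V : Type*} [Fintype V] (G : SimpleGraph V) : Polynomial ℝ :=
  ∑ k ∈ Finset.range (Fintype.card V + 1),
    C ((-1 : ℝ) ^ k * (numMatchings G k : ℝ)) * X ^ (Fintype.card V - k)

/-- The line graph `L(G)`: vertices are the edges of `G`, adjacent iff distinct and
sharing an endpoint. -/
def lineGraph' {V : Type*} (G : SimpleGraph V) : SimpleGraph G.edgeSet where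
  Adj e f := e ≠ f ∧ ∃ v, v ∈ (e : Sym2 V) ∧ v ∈ (f : Sym2 V)
  symm := ⟨fun e f h => ⟨h.1.symm, h.2.choose, h.2.choose_spec.2, h.2.choose_spec.1⟩⟩
  loopless := ⟨fun e h => h.1 rfl⟩

/-- `H ∪ K₁`: the disjoint union of `H` with one isolated vertex. -/
def addIsolated {V : Type*} (H : SimpleGraph V) : SimpleGraph (V ⊕ Unit) where
  Adj x y := ∃ a b, x = Sum.inl a ∧ y = Sum.inl b ∧ H.Adj a b
  symm := ⟨by rintro x y ⟨a, b, rfl, rfl, h⟩; exact ⟨b, a, rfl, rfl, h.symm⟩⟩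
  loopless := ⟨by rintro x ⟨a, b, rfl, h, hadj⟩; cases Sum.inl_injective h; exact hadj.ne rfl⟩

/-- `b` is the smallest zero of `p` in `(0,1]`. -/
def IsBetaZero (p : Polynomial ℝ) (b : ℝ) : Prop :=
  b ∈ Set.Ioc (0 : ℝ) 1 ∧ p.eval b = 0 ∧ ∀ y ∈ Set.Ioc (0 : ℝ) 1, p.eval y = 0 → b ≤ y

/-- `g` is the largest real zero of `p`. -/
def IsGammaZero (p : Polynomial ℝ) (g : ℝ) : Prop :=
  p.eval g = 0 ∧ ∀ y : ℝ, p.eval y = 0 → y ≤ g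

/-!
A clique cover `P` of `G` with `k` parts corresponds to the independent set of `Ĝ` formed by the
edges `(v, max of the part of v)` for the `n - k` vertices `v` that are not the maximum of their
part. Conversely, in an independent set of `Ĝ` every vertex starts at most one edge and no edge ends
where another starts, so sending each vertex to the upper end of its edge (or to itself) is a
retraction whose fibres are cliques. Hence `a_k(G) = i_{n-k}(Ĝ)`, i.e. `h(G,x) = x^n I(Ĝ,1/x)`,
so the nonzero roots of `h(G,·)` are the reciprocals of those of `I(Ĝ,·)`. Since `β ≤ 1`, the root
`1/β` of `h` is at least `1`, so `γ ≥ 1` and `1/γ` is a root of `I` in `(0,1]`; thus `γ = 1/β`.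
-/

open Finset

lemma IsGammaZero.eq_inv_of_isBetaZero {p q : ℝ[X]} {g b : ℝ}
    (hpq : ∀ x ≠ 0, p.eval x = 0 ↔ q.eval x⁻¹ = 0)
    (hg : IsGammaZero p g) (hb : IsBetaZero q b) : g = 1 / b := by
  obtain ⟨⟨hb0, hb1⟩, hqb, hb_min⟩ := hb
  have hinv_b_le : b⁻¹ ≤ g := hg.2 _ ((hpq _ (inv_ne_zero hb0.ne')).2 (by rwa [inv_inv]))
  have hg_ge_one : 1 ≤ g := (one_le_inv₀ hb0).2 hb1 |>.trans hinv_b_le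
  have hg0 : 0 < g := one_pos.trans_le hg_ge_one
  have hb_le_inv : b ≤ g⁻¹ :=
    hb_min _ ⟨inv_pos.2 hg0, inv_le_one_of_one_le₀ hg_ge_one⟩ ((hpq _ hg0.ne').1 hg.1)
  rw [one_div]
  exact le_antisymm ((le_inv_comm₀ hb0 hg0).1 hb_le_inv) hinv_b_le

lemma coeff_sum_C_mul_X_pow {R : Type*} [Semiring R] (N : ℕ) (a : ℕ → R) (k : ℕ) :
    (∑ i ∈ range (N + 1), C (a i) * X ^ i).coeff k = if k ≤ N then a k else 0 := by
  simp

lemma numIndepSets_eq_zero_of_forall_card_le {W : Type*} {H : SimpleGraph W} {m k : ℕ}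
    (hm : ∀ s, H.IsIndepFinset s → s.card ≤ m) (hk : m < k) : numIndepSets H k = 0 := by
  have hempty : {s : Finset W | H.IsIndepFinset s ∧ s.card = k} = ∅ :=
    Set.eq_empty_of_forall_notMem fun s ⟨hs, hcard⟩ => (hm s hs).not_gt (hcard ▸ hk)
  rw [numIndepSets, hempty, Set.ncard_empty]

lemma coeff_indepPoly {W : Type*} [Fintype W] (H : SimpleGraph W) (k : ℕ) :
    (indepPoly H).coeff k = (-1) ^ k * numIndepSets H k := by
  rw [indepPoly, coeff_sum_C_mul_X_pow]
  split_ifs with hk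
  · rfl
  · rw [numIndepSets_eq_zero_of_forall_card_le (fun s _ => s.card_le_univ) (not_le.1 hk)]
    simp

lemma eval_adjPoly {V : Type*} [Fintype V] [DecidableEq V] (G : SimpleGraph V) {x : ℝ}
    (hx : x ≠ 0) :
    (adjPoly G).eval x = x ^ Fintype.card V * (hStarPoly G).eval x⁻¹ := by
  simp only [adjPoly, hStarPoly, eval_finsetSum, eval_mul, eval_C, eval_pow, eval_X,
    mul_sum]
  rw [← sum_range_reflect]
  refine sum_congr rfl fun k hk => ?_
  have hk : k ≤ Fintype.card V := Nat.lt_succ_iff.1 (mem_range.1 hk)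
  rw [Nat.add_sub_cancel, Nat.sub_sub_self hk, pow_sub₀ x hx hk]
  ring

namespace Finpartition

lemma ext_of_part_eq {α : Type*} [DecidableEq α] {s : Finset α} {P Q : Finpartition s}
    (h : ∀ v, P.part v = Q.part v) : P = Q := by
  have key : ∀ {P Q : Finpartition s}, (∀ v, P.part v = Q.part v) → P.parts ⊆ Q.parts := by
    intro P Q h p hp
    obtain ⟨v, hv⟩ := P.nonempty_of_mem_parts hp
    rw [← P.part_eq_of_mem hp hv, h]
    exact Q.part_mem.2 (P.le hp hv)
  exact Finpartition.ext ((key h).antisymm (key fun v => (h v).symm))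

variable {α : Type*} [Fintype α] [DecidableEq α] [LinearOrder α]
  {P Q : Finpartition (univ : Finset α)} {v w : α}

def partMax (P : Finpartition (univ : Finset α)) (v : α) : α :=
  (P.part v).max' (P.part_nonempty.2 (mem_univ v))

lemma partMax_mem_part (P : Finpartition (univ : Finset α)) (v : α) :
    P.partMax v ∈ P.part v :=
  max'_mem _ _

lemma le_partMax (hw : w ∈ P.part v) : w ≤ P.partMax v :=
  le_max' _ _ hw

lemma self_le_partMax (P : Finpartition (univ : Finset α)) (v : α) : v ≤ P.partMax v :=
  le_partMax (P.mem_part (mem_univ v))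

lemma partMax_eq_partMax_iff : P.partMax w = P.partMax v ↔ w ∈ P.part v := by
  constructor
  · intro h
    have hparts : P.part w = P.part v :=
      P.eq_of_mem_parts (P.part_mem.2 (mem_univ w)) (P.part_mem.2 (mem_univ v))
        (P.partMax_mem_part w) (h ▸ P.partMax_mem_part v)
    exact hparts ▸ P.mem_part (mem_univ w)
  · intro h
    have hparts : P.part w = P.part v := P.part_eq_of_mem (P.part_mem.2 (mem_univ v)) h
    simp only [partMax, hparts]

lemma partMax_partMax (P : Finpartition (univ : Finset α)) (v : α) :
    P.partMax (P.partMax v) = P.partMax v :=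
  partMax_eq_partMax_iff.2 (P.partMax_mem_part v)

lemma partMax_injective : Function.Injective (partMax (α := α)) := by
  intro P Q h
  have hpart : ∀ v, P.part v = Q.part v := fun v => by
    ext w
    rw [← partMax_eq_partMax_iff, ← partMax_eq_partMax_iff, h]
  exact ext_of_part_eq hpart

lemma card_parts_eq_card_filter_partMax_eq (P : Finpartition (univ : Finset α)) :
    #P.parts = #(univ.filter fun v => P.partMax v = v) := by
  refine (card_bij (fun v _ => P.part v) ?_ ?_ ?_).symm
  · exact fun v _ => P.part_mem.2 (mem_univ v)
  · intro v hv w hw hvw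
    simp only [mem_filter, mem_univ, true_and] at hv hw
    rw [← hv, ← hw, partMax_eq_partMax_iff, ← hvw]
    exact P.mem_part (mem_univ v)
  · intro p hp
    obtain ⟨v, hv⟩ := P.nonempty_of_mem_parts hp
    refine ⟨P.partMax v, by simp [partMax_partMax], ?_⟩
    rw [← P.part_eq_of_mem hp hv]
    exact P.part_eq_of_mem (P.part_mem.2 (mem_univ v)) (P.partMax_mem_part v)

end Finpartition

instance Setoid.instDecidableRelKer {α β : Type*} [DecidableEq β] (f : α → β) :
    DecidableRel (Setoid.ker f) :=
  fun a b => decidable_of_iff (f a = f b) Setoid.ker_def.symm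

abbrev HatVert {n : ℕ} (G : SimpleGraph (Fin n)) :=
  {p : Fin n × Fin n // p.1 < p.2 ∧ G.Adj p.1 p.2}

namespace HatVert

open Finpartition

variable {n : ℕ} {G : SimpleGraph (Fin n)} {S : Finset (HatVert G)} {e f : HatVert G}
  {v w : Fin n} {P : Finpartition (univ : Finset (Fin n))}

lemma isIndepFinset_hatGraph_iff :
    (hatGraph G).IsIndepFinset S ↔
      Set.InjOn (fun e : HatVert G => e.1.1) S ∧ (∀ e ∈ S, ∀ f ∈ S, e.1.2 ≠ f.1.1) ∧
        ∀ e ∈ S, ∀ f ∈ S, e ≠ f → e.1.2 = f.1.2 → G.Adj e.1.1 f.1.1 := by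
  constructor
  · intro hS
    refine ⟨fun e he f hf hef => ?_, fun e he f hf hef => ?_, fun e he f hf hne h2 => ?_⟩
    · by_contra hne
      rcases le_total e.1.2 f.1.2 with hle | hle
      · exact hS e he f hf ⟨hne, Or.inl ⟨hle, Or.inl hef⟩⟩
      · exact hS e he f hf ⟨hne, Or.inr ⟨hle, Or.inl hef.symm⟩⟩
    · have hne : e ≠ f := by rintro rfl; exact e.2.1.ne' hef
      exact hS e he f hf ⟨hne, Or.inl ⟨hef.le.trans f.2.1.le, Or.inr (Or.inl hef)⟩⟩
    · by_contra hadj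
      exact hS e he f hf ⟨hne, Or.inl ⟨h2.le, Or.inr (Or.inr ⟨h2, hadj⟩)⟩⟩
  · rintro ⟨hinj, hsnd, hadj⟩
    have hrel : ∀ e ∈ S, ∀ f ∈ S, e ≠ f → ¬ hatRel G e.1 f.1 := by
      rintro e he f hf hne ⟨-, hfst | hsf | ⟨hsnd', hna⟩⟩
      · exact hne (hinj he hf hfst)
      · exact hsnd e he f hf hsf
      · exact hna (hadj e he f hf hne hsnd')
    rintro e he f hf ⟨hne, hef | hfe⟩
    exacts [hrel e he f hf hne hef, hrel f hf e he hne.symm hfe]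

lemma card_le_of_isIndepFinset (hS : (hatGraph G).IsIndepFinset S) : #S ≤ n := by
  simpa using card_le_card_of_injOn (fun e : HatVert G => e.1.1) (fun _ _ => mem_univ _)
    (isIndepFinset_hatGraph_iff.1 hS).1

/-- In an independent set of `Ĝ` each vertex is the lower end of at most one edge, so `root S v`,
the upper end of that edge (or `v` if there is none), does not depend on the choice. -/
noncomputable def root (S : Finset (HatVert G)) (v : Fin n) : Fin n :=
  if h : ∃ e ∈ S, e.1.1 = v then h.choose.1.2 else v

lemma root_eq_self (h : ∀ e ∈ S, e.1.1 ≠ v) : root S v = v := by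
  rw [root, dif_neg]
  rintro ⟨e, he, hev⟩
  exact h e he hev

lemma exists_of_root_ne (h : root S v ≠ v) : ∃ e ∈ S, e.1.1 = v ∧ e.1.2 = root S v := by
  by_cases hv : ∃ e ∈ S, e.1.1 = v
  · obtain ⟨he, hev⟩ := hv.choose_spec
    exact ⟨hv.choose, he, hev, by rw [root, dif_pos hv]⟩
  · push Not at hv
    exact absurd (root_eq_self hv) h

lemma root_eq_of_mem (hinj : Set.InjOn (fun e : HatVert G => e.1.1) S) (he : e ∈ S) :
    root S e.1.1 = e.1.2 := by
  have h : ∃ f ∈ S, f.1.1 = e.1.1 := ⟨e, he, rfl⟩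
  obtain ⟨hf, hfe⟩ := h.choose_spec
  rw [root, dif_pos h]
  exact congrArg (fun f : HatVert G => f.1.2) (hinj hf he hfe)

lemma le_root (S : Finset (HatVert G)) (v : Fin n) : v ≤ root S v := by
  by_contra h
  obtain ⟨e, -, rfl, he⟩ := exists_of_root_ne (ne_of_lt (not_le.1 h))
  exact h (he ▸ e.2.1.le)

lemma adj_root (h : root S v ≠ v) : G.Adj v (root S v) := by
  obtain ⟨e, -, rfl, he⟩ := exists_of_root_ne h
  exact he ▸ e.2.2

lemma root_root (hS : (hatGraph G).IsIndepFinset S) (v : Fin n) : root S (root S v) = root S v := by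
  by_cases h : root S v = v
  · rw [h, h]
  obtain ⟨e, he, -, hev⟩ := exists_of_root_ne h
  exact root_eq_self fun f hf hfe =>
    (isIndepFinset_hatGraph_iff.1 hS).2.1 e he f hf (hev.trans hfe.symm)

lemma adj_of_root_eq (hS : (hatGraph G).IsIndepFinset S) (hvw : v ≠ w) (h : root S v = root S w) : G.Adj v w := by
  by_cases hv : root S v = v <;> by_cases hw : root S w = w
  · exact absurd (hv.symm.trans (h.trans hw)) hvw
  · simpa [← h, hv] using (adj_root hw).symm
  · simpa [h, hw] using adj_root hv
  · obtain ⟨e, he, rfl, hev⟩ := exists_of_root_ne hv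
    obtain ⟨f, hf, rfl, hfw⟩ := exists_of_root_ne hw
    exact (isIndepFinset_hatGraph_iff.1 hS).2.2 e he f hf (fun hef => hvw (hef ▸ rfl))
      (hev.trans (h.trans hfw.symm))

noncomputable def rootPartition (S : Finset (HatVert G)) : Finpartition (univ : Finset (Fin n)) :=
  ofSetoid (Setoid.ker (root S))

lemma mem_part_rootPartition {w : Fin n} :
    w ∈ (rootPartition S).part v ↔ root S v = root S w :=
  mem_part_ofSetoid_iff_rel

lemma partMax_rootPartition (hS : (hatGraph G).IsIndepFinset S) :
    (rootPartition S).partMax = root S := by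
  funext v
  apply le_antisymm
  · have h := mem_part_rootPartition.1 ((rootPartition S).partMax_mem_part v)
    exact h ▸ le_root S _
  · exact le_partMax (mem_part_rootPartition.2 (root_root hS v).symm)

lemma isCliqueCover_rootPartition (hS : (hatGraph G).IsIndepFinset S) :
    G.IsCliqueCover (rootPartition S) := by
  intro p hp u hu w hw huw
  obtain ⟨v, hv⟩ := (rootPartition S).nonempty_of_mem_parts hp
  rw [← (rootPartition S).part_eq_of_mem hp hv, mem_coe, mem_part_rootPartition] at hu hw
  exact adj_of_root_eq hS huw (hu.symm.trans hw)

variable (G) [DecidableRel G.Adj]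

def starEdges (P : Finpartition (univ : Finset (Fin n))) : Finset (HatVert G) :=
  univ.filter fun e => P.partMax e.1.1 = e.1.2

variable {G}

lemma mem_starEdges : e ∈ starEdges G P ↔ P.partMax e.1.1 = e.1.2 := by
  simp [starEdges]

lemma exists_mem_starEdges (hP : G.IsCliqueCover P) (hv : P.partMax v ≠ v) :
    ∃ e ∈ starEdges G P, e.1.1 = v := by
  have hadj : G.Adj v (P.partMax v) := hP _ (P.part_mem.2 (mem_univ v))
    (P.mem_part (mem_univ v)) (P.partMax_mem_part v) (Ne.symm hv)
  exact ⟨⟨(v, P.partMax v), (P.self_le_partMax v).lt_of_ne (Ne.symm hv), hadj⟩,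
    mem_starEdges.2 rfl, rfl⟩

lemma isIndepFinset_starEdges (hP : G.IsCliqueCover P) :
    (hatGraph G).IsIndepFinset (starEdges G P) := by
  have hinj : Set.InjOn (fun e : HatVert G => e.1.1) (starEdges G P) := fun e he f hf hef =>
    Subtype.ext (Prod.ext hef (by
      rw [← mem_starEdges.1 (mem_coe.1 he), ← mem_starEdges.1 (mem_coe.1 hf)]
      exact congrArg _ hef))
  refine isIndepFinset_hatGraph_iff.2 ⟨hinj, fun e he f hf hef => ?_, fun e he f hf hne hsnd => ?_⟩
  · have h := mem_starEdges.1 hf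
    rw [← hef, ← mem_starEdges.1 he, partMax_partMax, mem_starEdges.1 he, hef] at h
    exact f.2.1.ne h
  · have hmem : e.1.1 ∈ P.part f.1.1 := by
      rw [← partMax_eq_partMax_iff, mem_starEdges.1 he, mem_starEdges.1 hf, hsnd]
    exact hP _ (P.part_mem.2 (mem_univ _)) hmem (P.mem_part (mem_univ _))
      fun h => hne (hinj he hf h)

lemma root_starEdges (hP : G.IsCliqueCover P) : root (starEdges G P) = P.partMax := by
  funext v
  by_cases hv : P.partMax v = v
  · rw [hv]
    refine root_eq_self fun e he hev => ?_
    have h := mem_starEdges.1 he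
    rw [hev, hv, ← hev] at h
    exact e.2.1.ne h
  · obtain ⟨e, he, rfl⟩ := exists_mem_starEdges hP hv
    rw [root_eq_of_mem (isIndepFinset_hatGraph_iff.1 (isIndepFinset_starEdges hP)).1 he,
      mem_starEdges.1 he]

lemma starEdges_rootPartition (hS : (hatGraph G).IsIndepFinset S) :
    starEdges G (rootPartition S) = S := by
  have hinj := (isIndepFinset_hatGraph_iff.1 hS).1
  ext e
  rw [mem_starEdges, partMax_rootPartition hS]
  refine ⟨fun h => ?_, root_eq_of_mem hinj⟩
  obtain ⟨f, hf, hfe, hroot⟩ := exists_of_root_ne (h ▸ e.2.1.ne' : root S e.1.1 ≠ e.1.1)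
  rwa [← Subtype.ext (Prod.ext hfe (hroot.trans h))]

lemma rootPartition_starEdges (hP : G.IsCliqueCover P) : rootPartition (starEdges G P) = P :=
  partMax_injective <| by rw [partMax_rootPartition (isIndepFinset_starEdges hP), root_starEdges hP]

lemma card_starEdges_add_card_parts (hP : G.IsCliqueCover P) :
    #(starEdges G P) + #P.parts = n := by
  have hstar : #(starEdges G P) = #(univ.filter fun v => P.partMax v ≠ v) := by
    refine card_bij (fun e _ => e.1.1) (fun e he => ?_)
      (fun e he f hf => (isIndepFinset_hatGraph_iff.1 (isIndepFinset_starEdges hP)).1 he hf)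
      (fun v hv => ?_)
    · simpa [mem_starEdges.1 he] using e.2.1.ne'
    · obtain ⟨e, he, hev⟩ := exists_mem_starEdges hP (mem_filter.1 hv).2
      exact ⟨e, he, hev⟩
  rw [hstar, card_parts_eq_card_filter_partMax_eq, add_comm, card_filter_add_card_filter_not,
    card_univ, Fintype.card_fin]

end HatVert

open HatVert in
lemma numCliqueCovers_eq_numIndepSets_hatGraph {n : ℕ} (G : SimpleGraph (Fin n))
    [DecidableRel G.Adj] {k : ℕ} (hk : k ≤ n) :
    numCliqueCovers G k = numIndepSets (hatGraph G) (n - k) := by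
  refine Set.ncard_congr (fun P _ => starEdges G P) ?_ ?_ ?_
  · rintro P ⟨hP, rfl⟩
    exact ⟨isIndepFinset_starEdges hP, by have := card_starEdges_add_card_parts hP; omega⟩
  · rintro P Q ⟨hP, -⟩ ⟨hQ, -⟩ h
    rw [← rootPartition_starEdges hP, h, rootPartition_starEdges hQ]
  · rintro S ⟨hS, hcard⟩
    have hsum := card_starEdges_add_card_parts (isCliqueCover_rootPartition hS)
    rw [starEdges_rootPartition hS, hcard] at hsum
    exact ⟨rootPartition S, ⟨isCliqueCover_rootPartition hS, by omega⟩, starEdges_rootPartition hS⟩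

lemma indepPoly_hatGraph {n : ℕ} (G : SimpleGraph (Fin n)) [DecidableRel G.Adj] :
    indepPoly (hatGraph G) = hStarPoly G := by
  ext k
  rw [coeff_indepPoly, hStarPoly, coeff_sum_C_mul_X_pow, Fintype.card_fin]
  split_ifs with hk
  · rw [numCliqueCovers_eq_numIndepSets_hatGraph G (Nat.sub_le n k), Nat.sub_sub_self hk]
  · rw [numIndepSets_eq_zero_of_forall_card_le (fun _ => HatVert.card_le_of_isIndepFinset)
      (not_le.1 hk)]
    simp

theorem stmt14_general {n : ℕ} (G : SimpleGraph (Fin n)) [DecidableRel G.Adj]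
    (g b : ℝ)
    (hg : IsGammaZero (adjPoly G) g)
    (hb : IsBetaZero (indepPoly (hatGraph G)) b) :
    g = 1 / b := by
  refine hg.eq_inv_of_isBetaZero (fun x hx => ?_) hb
  rw [eval_adjPoly G hx, indepPoly_hatGraph, Fintype.card_fin, mul_eq_zero,
    or_iff_right (pow_ne_zero n hx)]

/-- for connected `G` with at least one edge, `γ(G) = 1/β(Ĝ)`. -/
theorem stmt14 {n : ℕ} (G : SimpleGraph (Fin n)) [DecidableRel G.Adj]
    (hc : G.Connected) (he : ∃ a b, G.Adj a b) (g b : ℝ)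
    (hg : IsGammaZero (adjPoly G) g)
    (hb : IsBetaZero (indepPoly (hatGraph G)) b) :
    g = 1 / b :=
  stmt14_general G g b hg hb
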